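/- The functional ψ is invariant under scaling by powers of (1+y): for any polynomial p of degree d and any k ∈ ℕ, ψ_{d+k}(p · (1+y)^k) = ψ_d(p). -/
import Mathlib

open Polynomial Finset

noncomputable def psi (d : ℕ) (A : Polynomial ℝ) : ℝ :=
  (1 / (d + 1)) * ∑ k ∈ Finset.range (d + 1), A.coeff k / (d.choose k : ℝ)

lemma choose_key (d j : ℕ) (hj : j ≤ d) :
    (((d+1).choose j : ℝ))⁻¹ + (((d+1).choose (j+1) : ℝ))⁻¹
      = ((d:ℝ)+2) / (((d:ℝ)+1) * (d.choose j : ℝ)) := by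
  have h1 : (d+1) * d.choose j = (d+1).choose (j+1) * (j+1) := Nat.add_one_mul_choose_eq d j
  have h2 : d.choose j * (d+1) = (d+1).choose j * (d+1-j) := Nat.choose_mul_succ_eq d j
  have hC : (0:ℝ) < (d.choose j : ℝ) := by exact_mod_cast Nat.choose_pos hj
  have hA : (0:ℝ) < ((d+1).choose j : ℝ) := by
    exact_mod_cast Nat.choose_pos (hj.trans (Nat.le_succ d))
  have hB : (0:ℝ) < ((d+1).choose (j+1) : ℝ) := by
    exact_mod_cast Nat.choose_pos (Nat.succ_le_succ hj)
  have h1' : ((d:ℝ)+1) * (d.choose j : ℝ) = ((d+1).choose (j+1) : ℝ) * ((j:ℝ)+1) := by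
    exact_mod_cast h1
  have h2' : (d.choose j : ℝ) * ((d:ℝ)+1) = ((d+1).choose j : ℝ) * ((d:ℝ)+1-(j:ℝ)) := by
    have hle : j ≤ d + 1 := hj.trans (Nat.le_succ d)
    have h := congrArg (fun n : ℕ => (n:ℝ)) h2
    push_cast [Nat.cast_sub hle] at h
    linarith [h]
  have hd1 : ((d:ℝ)+1) ≠ 0 := by positivity
  field_simp
  linear_combination ((d+1).choose j : ℝ) * h1' + ((d+1).choose (j+1) : ℝ) * h2'

lemma psi_succ (d : ℕ) (p : Polynomial ℝ) (hp : p.natDegree ≤ d) :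
    psi (d+1) (p * (1 + X)) = psi d p := by
  have hco : ∀ j, (p * (1 + X)).coeff j = p.coeff j + (p * X).coeff j := by
    intro j
    have : p * (1 + X) = p + p * X := by ring
    rw [this, coeff_add]
  unfold psi
  have hsum : ∑ j ∈ Finset.range (d + 1 + 1), (p * (1 + X)).coeff j / ((d+1).choose j : ℝ)
      = ∑ j ∈ Finset.range (d + 1 + 1), p.coeff j / ((d+1).choose j : ℝ)
        + ∑ j ∈ Finset.range (d + 1 + 1), (p * X).coeff j / ((d+1).choose j : ℝ) := by
    rw [← Finset.sum_add_distrib]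
    exact Finset.sum_congr rfl fun j _ => by rw [hco j, add_div]
  rw [hsum]
  have h1 : ∑ j ∈ Finset.range (d + 1 + 1), p.coeff j / ((d+1).choose j : ℝ)
      = ∑ j ∈ Finset.range (d + 1), p.coeff j / ((d+1).choose j : ℝ) := by
    rw [Finset.sum_range_succ, coeff_eq_zero_of_natDegree_lt (lt_of_le_of_lt hp (Nat.lt_succ_self d))]
    simp
  have h2 : ∑ j ∈ Finset.range (d + 1 + 1), (p * X).coeff j / ((d+1).choose j : ℝ)
      = ∑ j ∈ Finset.range (d + 1), p.coeff j / ((d+1).choose (j+1) : ℝ) := by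
    rw [Finset.sum_range_succ']
    simp [coeff_mul_X]
  rw [h1, h2, ← Finset.sum_add_distrib]
  have key : ∀ j ∈ Finset.range (d+1),
      p.coeff j / ((d+1).choose j : ℝ) + p.coeff j / ((d+1).choose (j+1) : ℝ)
        = p.coeff j * (((d:ℝ)+2) / (((d:ℝ)+1) * (d.choose j : ℝ))) := by
    intro j hj
    rw [Finset.mem_range] at hj
    rw [← choose_key d j (Nat.lt_succ_iff.mp hj)]
    ring
  rw [Finset.sum_congr rfl key]
  rw [Finset.mul_sum, Finset.mul_sum]
  refine Finset.sum_congr rfl fun j hj => ?_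
  rw [Finset.mem_range] at hj
  have hC : (d.choose j : ℝ) ≠ 0 := by
    exact_mod_cast Nat.choose_pos (Nat.lt_succ_iff.mp hj) |>.ne'
  have hd1 : ((d:ℝ)+1) ≠ 0 := by positivity
  have hd2 : ((d:ℝ)+2) ≠ 0 := by positivity
  push_cast
  field_simp
  ring

theorem psi_scale_invariant (d k : ℕ) (p : Polynomial ℝ) (hp : p.natDegree = d) :
    psi (d + k) (p * (1 + X) ^ k) = psi d p := by
  have hle : p.natDegree ≤ d := hp.le
  clear hp
  induction k with
  | zero => simp
  | succ k ih =>
    have hdeg : (p * (1 + X) ^ k).natDegree ≤ d + k := by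
      calc (p * (1 + X) ^ k).natDegree ≤ p.natDegree + ((1 + X : Polynomial ℝ) ^ k).natDegree :=
            natDegree_mul_le
        _ ≤ d + k := by
            have h1 : ((1 + X : Polynomial ℝ)).natDegree = 1 := by
              simpa [add_comm] using natDegree_X_add_C (1 : ℝ)
            have := natDegree_pow_le (p := (1 + X : Polynomial ℝ)) (n := k)
            rw [h1] at this
            omega
    have : p * (1 + X) ^ (k + 1) = (p * (1 + X) ^ k) * (1 + X) := by ring
    rw [this]
    have := psi_succ (d + k) (p * (1 + X) ^ k) hdeg
    rw [show d + (k+1) = (d + k) + 1 from rfl, this, ih]
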